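/- arXiv:1907.08964 — 7 statements merged into one kernel-verified Lean document; each statement's English description precedes it below -/
import Mathlib

section
/- Let (A, π_X, π_Y) be a canonical amalgamation of a meet-extension e_X : P → X and a join-extension e_Y : P → Y. Then every element a ∈ A is the least upper bound in A of {z ∈ π_X '' X : z ≤ a}, every element a ∈ A is the greatest lower bound in A of {z ∈ π_Y '' Y : z ≥ a}, and every element of A lies in π_X '' X ∪ π_Y '' Y. -/
universe u

def IsOrdEmb {P X : Type u} [Preorder P] [Preorder X] (e : P → X) : Prop :=
  ∀ a b : P, e a ≤ e b ↔ a ≤ b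

def IsMeetExtension {P X : Type u} [PartialOrder P] [PartialOrder X] (e : P → X) : Prop :=
  IsOrdEmb e ∧ ∀ x : X, IsGLB (e '' {p : P | x ≤ e p}) x

def IsJoinExtension {P Y : Type u} [PartialOrder P] [PartialOrder Y] (e : P → Y) : Prop :=
  IsOrdEmb e ∧ ∀ y : Y, IsLUB (e '' {p : P | e p ≤ y}) y

def CompletelyMeetPreserving {X A : Type u} [PartialOrder X] [PartialOrder A] (g : X → A) : Prop :=
  ∀ (S : Set X) (x : X), IsGLB S x → IsGLB (g '' S) (g x)

def CompletelyJoinPreserving {Y A : Type u} [PartialOrder Y] [PartialOrder A] (g : Y → A) : Prop :=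
  ∀ (T : Set Y) (y : Y), IsLUB T y → IsLUB (g '' T) (g y)

def IsCanonicalAmalgamation {P X Y A : Type u} [PartialOrder P] [PartialOrder X]
    [PartialOrder Y] [PartialOrder A] (eX : P → X) (eY : P → Y)
    (πX : X → A) (πY : Y → A) : Prop :=
  IsOrdEmb πX ∧ CompletelyMeetPreserving πX ∧
  IsOrdEmb πY ∧ CompletelyJoinPreserving πY ∧
  (πX ∘ eX = πY ∘ eY) ∧
  ∀ (Q : Type u) [PartialOrder Q], ∀ (f : X → Q) (g : Y → Q),
    Monotone f → Monotone g → (∀ (x : X) (y : Y), πY y ≤ πX x → g y ≤ f x) →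
    ∃! u : A → Q, Monotone u ∧ u ∘ πX = f ∧ u ∘ πY = g

/-- in a canonical amalgamation, A is join-generated by πX[X],
meet-generated by πY[Y], and A = πX[X] ∪ πY[Y]. -/
theorem canonical_amalgamation_generation {P X Y A : Type u} [PartialOrder P] [PartialOrder X]
    [PartialOrder Y] [PartialOrder A]
    {eX : P → X} {eY : P → Y} {πX : X → A} {πY : Y → A}
    (hX : IsMeetExtension eX) (hY : IsJoinExtension eY)
    (h : IsCanonicalAmalgamation eX eY πX πY) :
    (∀ a : A, IsLUB {z : A | z ∈ Set.range πX ∧ z ≤ a} a) ∧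
    (∀ a : A, IsGLB {z : A | z ∈ Set.range πY ∧ a ≤ z} a) ∧
    (∀ a : A, a ∈ Set.range πX ∪ Set.range πY) := by
  obtain ⟨hπX, hmeet, hπY, hjoin, hcomm, huniv⟩ := h
  have monoX : Monotone πX := fun a b hab => (hπX a b).mpr hab
  have monoY : Monotone πY := fun a b hab => (hπY a b).mpr hab
  have claim3 : ∀ a : A, a ∈ Set.range πX ∪ Set.range πY := by
    obtain ⟨u, ⟨hu_mono, huX, huY⟩, _⟩ :=
      huniv {z : A // z ∈ Set.range πX ∪ Set.range πY}
        (fun x => ⟨πX x, Or.inl ⟨x, rfl⟩⟩) (fun y => ⟨πY y, Or.inr ⟨y, rfl⟩⟩)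
        (fun a b hab => Subtype.mk_le_mk.mpr (monoX hab))
        (fun a b hab => Subtype.mk_le_mk.mpr (monoY hab))
        (fun x y hxy => Subtype.mk_le_mk.mpr hxy)
    obtain ⟨v, _, hv_uniq⟩ := huniv A πX πY monoX monoY (fun x y hxy => hxy)
    have h1 : (Subtype.val ∘ u) = v := by
      apply hv_uniq
      refine ⟨fun a b hab => hu_mono hab, ?_, ?_⟩
      · funext x
        exact congrArg Subtype.val (congrFun huX x)
      · funext y
        exact congrArg Subtype.val (congrFun huY y)
    have h2 : (id : A → A) = v :=
      hv_uniq _ ⟨monotone_id, rfl, rfl⟩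
    intro a
    have : (u a).val = a := by rw [show (u a).val = (Subtype.val ∘ u) a from rfl, h1, ← h2]; rfl
    rw [← this]
    exact (u a).property
  refine ⟨?_, ?_, claim3⟩
  · intro a
    rcases claim3 a with ⟨x, rfl⟩ | ⟨y, rfl⟩
    · exact IsGreatest.isLUB ⟨⟨⟨x, rfl⟩, le_refl _⟩, fun z hz => hz.2⟩
    · have h1 := hjoin _ _ (hY.2 y)
      constructor
      · exact fun z hz => hz.2
      · intro b hb
        apply h1.2
        rintro z ⟨w, ⟨p, hp, rfl⟩, rfl⟩
        exact hb ⟨⟨eX p, congrFun hcomm p⟩, monoY hp⟩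
  · intro a
    rcases claim3 a with ⟨x, rfl⟩ | ⟨y, rfl⟩
    · have h1 := hmeet _ _ (hX.2 x)
      constructor
      · exact fun z hz => hz.2
      · intro b hb
        apply h1.2
        rintro z ⟨w, ⟨p, hp, rfl⟩, rfl⟩
        exact hb ⟨⟨eY p, (congrFun hcomm p).symm⟩, monoX hp⟩
    · exact IsLeast.isGLB ⟨⟨⟨y, rfl⟩, le_refl _⟩, fun z hz => hz.2⟩
end

section
/- Let (A, π_X, π_Y) be a canonical amalgamation of a meet-extension e_X : P → X and a join-extension e_Y : P → Y, and set γ = π_X ∘ e_X (= π_Y ∘ e_Y). Then: (1) γ is an order-embedding; (2) if S ⊆ P and m is the greatest lower bound of S in P, then γ m is the greatest lower bound of γ '' S in A if and only if e_X m is the greatest lower bound of e_X '' S in X; (3) if T ⊆ P and j is the least upper bound of T in P, then γ j is the least upper bound of γ '' T in A if and only if e_Y j is the least upper bound of e_Y '' T in Y. -/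
universe u

/-- properties of the map γ = πX ∘ eX (= πY ∘ eY). -/
theorem canonical_amalgamation_gamma {P X Y A : Type u} [PartialOrder P] [PartialOrder X]
    [PartialOrder Y] [PartialOrder A]
    {eX : P → X} {eY : P → Y} {πX : X → A} {πY : Y → A}
    (hX : IsMeetExtension eX) (hY : IsJoinExtension eY)
    (h : IsCanonicalAmalgamation eX eY πX πY) :
    IsOrdEmb (πX ∘ eX) ∧
    (∀ (S : Set P) (m : P), IsGLB S m →
      (IsGLB ((πX ∘ eX) '' S) ((πX ∘ eX) m) ↔ IsGLB (eX '' S) (eX m))) ∧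
    (∀ (T : Set P) (j : P), IsLUB T j →
      (IsLUB ((πX ∘ eX) '' T) ((πX ∘ eX) j) ↔ IsLUB (eY '' T) (eY j))) := by

  obtain ⟨hπX, hπXm, hπY, hπYj, hcomm, -⟩ := h
  obtain ⟨heX, -⟩ := hX
  obtain ⟨heY, -⟩ := hY
  have hγ : IsOrdEmb (πX ∘ eX) := fun a b => (hπX _ _).trans (heX a b)
  refine ⟨hγ, ?_, ?_⟩
  · intro S m hm
    constructor
    · intro hA
      constructor
      · rintro x ⟨p, hp, rfl⟩
        exact (heX m p).mpr (hm.1 hp)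
      · intro x hx
        have hlb : πX x ∈ lowerBounds ((πX ∘ eX) '' S) := by
          rintro a ⟨p, hp, rfl⟩
          exact (hπX x (eX p)).mpr (hx ⟨p, hp, rfl⟩)
        exact (hπX x (eX m)).mp (hA.2 hlb)
    · intro hXglb
      have := hπXm _ _ hXglb
      rwa [Set.image_image] at this
  · intro T j hj
    have hco : ∀ p, πX (eX p) = πY (eY p) := fun p => congrFun hcomm p
    constructor
    · intro hA
      constructor
      · rintro y ⟨p, hp, rfl⟩
        exact (heY p j).mpr (hj.1 hp)
      · intro y hy
        have hub : πY y ∈ upperBounds ((πX ∘ eX) '' T) := by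
          rintro a ⟨p, hp, rfl⟩
          show πX (eX p) ≤ πY y
          rw [hco p]
          exact (hπY (eY p) y).mpr (hy ⟨p, hp, rfl⟩)
        have : πX (eX j) ≤ πY y := hA.2 hub
        rw [hco j] at this
        exact (hπY (eY j) y).mp this
    · intro hYlub
      have := hπYj _ _ hYlub
      rw [Set.image_image] at this
      have heq : (fun x => πY (eY x)) = (πX ∘ eX) := by
        funext p; exact (hco p).symm
      rw [heq, ← hco j] at this
      exact this
end

section
/- Let e : P → C be a canonical extension of a poset P with respect to (𝓕, 𝓘). Order 𝓕 by reverse inclusion and 𝓘 by inclusion, and define π_𝓕 : 𝓕 → C by π_𝓕(F) = ⨅ (e '' F) and π_𝓘 : 𝓘 → C by π_𝓘(I) = ⨆ (e '' I). Then π_𝓕 and π_𝓘 are order-embeddings. -/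
universe u

/-- `e : P → C` is a canonical extension of `P` with respect to `(𝓕, 𝓘)`:
an order-embedding into a complete lattice that is `(𝓕, 𝓘)`-dense and `(𝓕, 𝓘)`-compact. -/
def IsCanonicalExtension {P C : Type u} [PartialOrder P] [CompleteLattice C]
    (𝓕 𝓘 : Set (Set P)) (e : P → C) : Prop :=
  (∀ a b : P, e a ≤ e b ↔ a ≤ b) ∧
  (∀ z : C, z = sSup {w : C | ∃ F ∈ 𝓕, w = sInf (e '' F) ∧ w ≤ z}) ∧
  (∀ z : C, z = sInf {w : C | ∃ I ∈ 𝓘, w = sSup (e '' I) ∧ z ≤ w}) ∧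
  (∀ F ∈ 𝓕, ∀ I ∈ 𝓘, sInf (e '' F) ≤ sSup (e '' I) → (F ∩ I).Nonempty)

/-- the maps π𝓕 : F ↦ ⨅ e '' F (on 𝓕 with reverse inclusion) and
π𝓘 : I ↦ ⨆ e '' I (on 𝓘 with inclusion) are order-embeddings. -/
theorem canonical_extension_embeddings {P C : Type u} [PartialOrder P] [CompleteLattice C]
    (𝓕 𝓘 : Set (Set P)) (e : P → C)
    (h𝓕up : ∀ F ∈ 𝓕, IsUpperSet F) (h𝓕p : ∀ p : P, Set.Ici p ∈ 𝓕)
    (h𝓘dn : ∀ I ∈ 𝓘, IsLowerSet I) (h𝓘p : ∀ p : P, Set.Iic p ∈ 𝓘)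
    (h : IsCanonicalExtension 𝓕 𝓘 e) :
    (∀ F₁ ∈ 𝓕, ∀ F₂ ∈ 𝓕, (sInf (e '' F₁) ≤ sInf (e '' F₂) ↔ F₂ ⊆ F₁)) ∧
    (∀ I₁ ∈ 𝓘, ∀ I₂ ∈ 𝓘, (sSup (e '' I₁) ≤ sSup (e '' I₂) ↔ I₁ ⊆ I₂)) := by
  obtain ⟨hemb, _, _, hcpt⟩ := h
  constructor
  · intro F₁ hF₁ F₂ hF₂
    constructor
    · intro hle p hp
      have h1 : sInf (e '' F₁) ≤ sSup (e '' Set.Iic p) := by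
        exact hle.trans ((sInf_le (Set.mem_image_of_mem e hp)).trans (le_sSup (Set.mem_image_of_mem e (le_refl p))))
      obtain ⟨q, hq₁, hq₂⟩ := hcpt F₁ hF₁ (Set.Iic p) (h𝓘p p) h1
      exact h𝓕up F₁ hF₁ hq₂ hq₁
    · intro hsub
      refine le_sInf ?_
      rintro w ⟨p, hp, rfl⟩
      exact sInf_le (Set.mem_image_of_mem e (hsub hp))
  · intro I₁ hI₁ I₂ hI₂
    constructor
    · intro hle p hp
      have h1 : sInf (e '' Set.Ici p) ≤ sSup (e '' I₂) := by
        exact ((sInf_le (Set.mem_image_of_mem e (le_refl p))).trans (le_sSup (Set.mem_image_of_mem e hp))).trans hle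
      obtain ⟨q, hq₁, hq₂⟩ := hcpt (Set.Ici p) (h𝓕p p) I₂ hI₂ h1
      exact h𝓘dn I₂ hI₂ hq₁ hq₂
    · intro hsub
      refine sSup_le ?_
      rintro w ⟨p, hp, rfl⟩
      exact le_sSup (Set.mem_image_of_mem e (hsub hp))
end

section
/- Let P be a poset and let 𝓕, 𝓘 be as below. If e : P → C and e' : P → C' are both canonical extensions of P with respect to (𝓕, 𝓘), then there is an order isomorphism φ : C → C' such that φ ∘ e = e'. -/
universe u

section Helpers

variable {P C : Type u} [PartialOrder P] [CompleteLattice C]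
variable {𝓕 𝓘 : Set (Set P)} {e : P → C}

lemma CE.lemA (h : IsCanonicalExtension 𝓕 𝓘 e) {F I : Set P} (hF : F ∈ 𝓕) (hI : I ∈ 𝓘) :
    sInf (e '' F) ≤ sSup (e '' I) ↔ (F ∩ I).Nonempty := by
  constructor
  · exact h.2.2.2 F hF I hI
  · rintro ⟨p, hpF, hpI⟩
    exact le_trans (sInf_le ⟨p, hpF, rfl⟩) (le_sSup ⟨p, hpI, rfl⟩)

lemma CE.lemB (h : IsCanonicalExtension 𝓕 𝓘 e) {I : Set P} (hI : I ∈ 𝓘) (z : C) :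
    z ≤ sSup (e '' I) ↔ ∀ F ∈ 𝓕, sInf (e '' F) ≤ z → (F ∩ I).Nonempty := by
  constructor
  · intro hz F hF hle
    exact h.2.2.2 F hF I hI (hle.trans hz)
  · intro hyp
    calc z = sSup {w : C | ∃ F ∈ 𝓕, w = sInf (e '' F) ∧ w ≤ z} := h.2.1 z
    _ ≤ sSup (e '' I) := by
        apply sSup_le
        rintro w ⟨F, hF, rfl, hwz⟩
        exact (CE.lemA h hF hI).mpr (hyp F hF hwz)

lemma CE.eq_of_upper (h : IsCanonicalExtension 𝓕 𝓘 e) {z w : C}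
    (hzw : ∀ I ∈ 𝓘, (z ≤ sSup (e '' I) ↔ w ≤ sSup (e '' I))) : z = w := by
  have hz := h.2.2.1 z
  have hw := h.2.2.1 w
  rw [hz, hw]
  congr 1
  ext t
  constructor
  · rintro ⟨I, hI, rfl, hle⟩; exact ⟨I, hI, rfl, (hzw I hI).mp hle⟩
  · rintro ⟨I, hI, rfl, hle⟩; exact ⟨I, hI, rfl, (hzw I hI).mpr hle⟩

lemma CE.inf_Ici (h : IsCanonicalExtension 𝓕 𝓘 e) (p : P) :
    sInf (e '' Set.Ici p) = e p := by
  apply le_antisymm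
  · exact sInf_le ⟨p, le_refl p, rfl⟩
  · apply le_sInf
    rintro w ⟨q, hq, rfl⟩
    exact (h.1 p q).mpr hq

lemma CE.sup_Iic (h : IsCanonicalExtension 𝓕 𝓘 e) (p : P) :
    sSup (e '' Set.Iic p) = e p := by
  apply le_antisymm
  · apply sSup_le
    rintro w ⟨q, hq, rfl⟩
    exact (h.1 q p).mpr hq
  · exact le_sSup ⟨p, le_refl p, rfl⟩

end Helpers

section Transfer

variable {P C C' : Type u} [PartialOrder P] [CompleteLattice C] [CompleteLattice C']
variable {𝓕 𝓘 : Set (Set P)} {e : P → C} {e' : P → C'}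

/-- The canonical map from `C` to `C'`. -/
noncomputable def CE.phi (𝓕 : Set (Set P)) (e : P → C) (e' : P → C') (z : C) : C' :=
  sSup {w : C' | ∃ F ∈ 𝓕, sInf (e '' F) ≤ z ∧ w = sInf (e' '' F)}

lemma CE.phi_le_iff (h : IsCanonicalExtension 𝓕 𝓘 e) (h' : IsCanonicalExtension 𝓕 𝓘 e')
    {I : Set P} (hI : I ∈ 𝓘) (z : C) :
    CE.phi 𝓕 e e' z ≤ sSup (e' '' I) ↔ z ≤ sSup (e '' I) := by
  rw [CE.lemB h hI z]
  unfold CE.phi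
  rw [sSup_le_iff]
  constructor
  · intro hyp F hF hle
    exact (CE.lemA h' hF hI).mp (hyp _ ⟨F, hF, hle, rfl⟩)
  · rintro hyp w ⟨F, hF, hle, rfl⟩
    exact (CE.lemA h' hF hI).mpr (hyp F hF hle)

lemma CE.phi_monotone : Monotone (CE.phi 𝓕 e e') := by
  intro a b hab
  apply sSup_le_sSup
  rintro w ⟨F, hF, hle, rfl⟩
  exact ⟨F, hF, hle.trans hab, rfl⟩

lemma CE.psi_phi (h : IsCanonicalExtension 𝓕 𝓘 e) (h' : IsCanonicalExtension 𝓕 𝓘 e') (z : C) :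
    CE.phi 𝓕 e' e (CE.phi 𝓕 e e' z) = z := by
  apply CE.eq_of_upper h
  intro I hI
  rw [CE.phi_le_iff h' h hI, CE.phi_le_iff h h' hI]

end Transfer

/-- canonical extensions with respect to (𝓕, 𝓘) are unique up to a
commuting order isomorphism. -/
theorem canonical_extension_unique {P C C' : Type u} [PartialOrder P] [CompleteLattice C]
    [CompleteLattice C']
    (𝓕 𝓘 : Set (Set P))
    (h𝓕up : ∀ F ∈ 𝓕, IsUpperSet F) (h𝓕p : ∀ p : P, Set.Ici p ∈ 𝓕)
    (h𝓘dn : ∀ I ∈ 𝓘, IsLowerSet I) (h𝓘p : ∀ p : P, Set.Iic p ∈ 𝓘)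
    (e : P → C) (e' : P → C')
    (h : IsCanonicalExtension 𝓕 𝓘 e) (h' : IsCanonicalExtension 𝓕 𝓘 e') :
    ∃ φ : C ≃o C', ∀ p : P, φ (e p) = e' p := by
  refine ⟨⟨⟨CE.phi 𝓕 e e', CE.phi 𝓕 e' e, fun z => CE.psi_phi h h' z,
      fun z => CE.psi_phi h' h z⟩, ?_⟩, ?_⟩
  · intro a b
    constructor
    · intro hab
      have := CE.phi_monotone (𝓕 := 𝓕) (e := e') (e' := e) hab
      simp only [Equiv.coe_fn_mk] at this
      rwa [CE.psi_phi h h', CE.psi_phi h h'] at this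
    · exact fun hab => CE.phi_monotone hab
  · intro p
    show CE.phi 𝓕 e e' (e p) = e' p
    apply le_antisymm
    · apply sSup_le
      rintro w ⟨F, hF, hle, rfl⟩
      rw [← CE.sup_Iic h p] at hle
      obtain ⟨q, hqF, hqp⟩ := (CE.lemA h hF (h𝓘p p)).mp hle
      have hpF : p ∈ F := h𝓕up F hF hqp hqF
      exact sInf_le ⟨p, hpF, rfl⟩
    · exact le_sSup ⟨Set.Ici p, h𝓕p p, by rw [CE.inf_Ici h p], (CE.inf_Ici h' p).symm⟩
end

section
/- Let α be a regular cardinal, let e_X : P → X be an α-supported meet-extension, let Q be a poset, and let f : P → Q be a monotone (α, e_X)-continuous map. Let D = {x ∈ X : f '' (e_X⁻¹(x^↑)) has a greatest lower bound in Q}, and for x ∈ D let f_X(x) be that greatest lower bound. Let g be a partial map from X to Q whose domain dom(g) contains e_X '' P, such that g ∘ e_X = f and g is α-meet-preserving on dom(g) (whenever Z ⊆ dom(g) with |Z| < α has a greatest lower bound b within the subposet dom(g), g(b) is the greatest lower bound of g '' Z in Q). Then g(x) = f_X(x) for every x ∈ D ∩ dom(g). -/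
universe u

/-- `e_X` is `α`-supported: every element of `X` is the greatest lower bound of the image of
a subset of `P` of size `< α`. -/
def AlphaSupported {P X : Type u} [PartialOrder P] [PartialOrder X]
    (α : Cardinal.{u}) (eX : P → X) : Prop :=
  ∀ x : X, ∃ S : Set P, Cardinal.mk ↥S < α ∧ IsGLB (eX '' S) x

/-- `f` is `(α, e_X)`-continuous. -/
def AlphaMeetContinuous {P X Q : Type u} [PartialOrder P] [PartialOrder X] [PartialOrder Q]
    (α : Cardinal.{u}) (eX : P → X) (f : P → Q) : Prop :=
  ∀ (q : Q) (S : Set P), S ⊆ f ⁻¹' Set.Ici q → Cardinal.mk ↥S < α →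
    ∃ (qS : Q) (xS : X),
      IsGLB (f '' S) qS ∧ IsGLB (f '' (eX ⁻¹' Set.Ici xS)) qS ∧
      upperBounds S ⊆ eX ⁻¹' Set.Ici xS

/-- The domain of the partial lift `f_X`: those `x ∈ X` for which
`f '' (e_X⁻¹(x^↑))` has a greatest lower bound in `Q`. -/
def domFX {P X Q : Type u} [PartialOrder P] [PartialOrder X] [PartialOrder Q]
    (eX : P → X) (f : P → Q) : Set X :=
  {x : X | ∃ q : Q, IsGLB (f '' (eX ⁻¹' Set.Ici x)) q}

/-- any partial map `g` on a domain containing `e_X '' P` with `g ∘ e_X = f`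
that is `α`-meet-preserving on its domain agrees with `f_X` on `dom(f_X) ∩ dom(g)`. -/
theorem fX_unique {P X Q : Type u} [PartialOrder P] [PartialOrder X] [PartialOrder Q]
    {α : Cardinal.{u}} (hα : α.IsRegular)
    {eX : P → X} (hX : IsMeetExtension eX) (hsup : AlphaSupported α eX)
    {f : P → Q} (hf : Monotone f) (hc : AlphaMeetContinuous α eX f)
    (fX : X → Q) (hfX : ∀ x ∈ domFX eX f, IsGLB (f '' (eX ⁻¹' Set.Ici x)) (fX x))
    (Dg : Set X) (g : X → Q)
    (hDg : Set.range eX ⊆ Dg)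
    (hge : ∀ p : P, g (eX p) = f p)
    (hgm : ∀ Z : Set X, Z ⊆ Dg → Cardinal.mk ↥Z < α →
      ∀ b ∈ Dg, b ∈ lowerBounds Z → (∀ c ∈ Dg, c ∈ lowerBounds Z → c ≤ b) →
      IsGLB (g '' Z) (g b)) :
    ∀ x ∈ domFX eX f ∩ Dg, g x = fX x := by
  rintro x ⟨hxD, hxg⟩
  have hglbX := hfX x hxD
  obtain ⟨S, hScard, hSglb⟩ := hsup x
  -- g x is a lower bound of f '' (eX ⁻¹' Set.Ici x)
  have hgx_lb : g x ∈ lowerBounds (f '' (eX ⁻¹' Set.Ici x)) := by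
    rintro q ⟨p, hp, rfl⟩
    -- use Z = {x, eX p}
    have hZsub : ({x, eX p} : Set X) ⊆ Dg := by
      rintro z (rfl | rfl)
      · exact hxg
      · exact hDg ⟨p, rfl⟩
    have hZcard : Cardinal.mk ↥({x, eX p} : Set X) < α :=
      lt_of_lt_of_le ((Set.toFinite ({x, eX p} : Set X)).lt_aleph0)
        hα.aleph0_le
    have hxlb : x ∈ lowerBounds ({x, eX p} : Set X) := by
      rintro z (rfl | rfl)
      · exact le_rfl
      · exact hp
    have hglb := hgm _ hZsub hZcard x hxg hxlb
      (fun c _ hc' => hc' (by exact Set.mem_insert _ _))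
    exact hglb.1 ⟨eX p, by simp, hge p⟩
  -- g x is the GLB of f '' S
  have hSsub : S ⊆ eX ⁻¹' Set.Ici x := fun s hs => hSglb.1 ⟨s, hs, rfl⟩
  have hZsub : eX '' S ⊆ Dg := fun z ⟨p, _, hp⟩ => hDg ⟨p, hp⟩
  have hZcard : Cardinal.mk ↥(eX '' S) < α :=
    lt_of_le_of_lt (Cardinal.mk_image_le) hScard
  have hglbS := hgm _ hZsub hZcard x hxg hSglb.1
    (fun c _ hc' => hSglb.2 hc')
  have himg : g '' (eX '' S) = f '' S := by
    rw [← Set.image_comp]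
    exact Set.image_congr (fun p _ => hge p)
  rw [himg] at hglbS
  have h1 : g x ≤ fX x := hglbX.2 hgx_lb
  have h2 : fX x ≤ g x := hglbS.2 (fun q ⟨s, hs, hq⟩ =>
    hq ▸ hglbX.1 ⟨s, hSsub hs, rfl⟩)
  exact le_antisymm h1 h2
end

section
/- Let P be a poset, and let 𝓓 be a meet-specification of P all of whose members are finite. Let X be the set of all nonempty finitely generated 𝓓-filters of P ordered by reverse inclusion, and let e_X : P → X be the map p ↦ p^↑. If L is a lattice and f : P → L is a 𝓓-morphism, then f has enough meets for e_X: for every x ∈ X, the set f '' (e_X⁻¹({x' ∈ X : x' ≥ x})) has a greatest lower bound in L, and it equals the greatest lower bound of f '' S for any finite S ⊆ P such that x is the smallest 𝓓-filter containing S. -/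
universe u

/-- `𝓓` is a meet-specification of `P`: every member has a greatest lower bound in `P`,
and all singletons belong to `𝓓`. -/
def IsMeetSpec {P : Type u} [PartialOrder P] (𝓓 : Set (Set P)) : Prop :=
  (∀ S ∈ 𝓓, ∃ m : P, IsGLB S m) ∧ ∀ p : P, {p} ∈ 𝓓

/-- A `𝓓`-filter: an up-set closed under the meets of members of `𝓓`. -/
def IsDFilter {P : Type u} [PartialOrder P] (𝓓 : Set (Set P)) (F : Set P) : Prop :=
  IsUpperSet F ∧ ∀ S ∈ 𝓓, S ⊆ F → ∀ m : P, IsGLB S m → m ∈ F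

/-- `F` is the smallest `𝓓`-filter containing `S`. -/
def SmallestDFilter {P : Type u} [PartialOrder P] (𝓓 : Set (Set P)) (S F : Set P) : Prop :=
  IsDFilter 𝓓 F ∧ S ⊆ F ∧ ∀ G : Set P, IsDFilter 𝓓 G → S ⊆ G → F ⊆ G

/-- A nonempty `α`-generated `𝓓`-filter. -/
def GoodFilter {P : Type u} [PartialOrder P] (𝓓 : Set (Set P)) (α : Cardinal.{u})
    (F : Set P) : Prop :=
  F.Nonempty ∧ IsDFilter 𝓓 F ∧ ∃ S : Set P, Cardinal.mk ↥S < α ∧ SmallestDFilter 𝓓 S F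

/-- A nonempty finitely generated `𝓓`-filter. -/
def GoodFilterFin {P : Type u} [PartialOrder P] (𝓓 : Set (Set P)) (F : Set P) : Prop :=
  F.Nonempty ∧ IsDFilter 𝓓 F ∧ ∃ S : Set P, S.Finite ∧ SmallestDFilter 𝓓 S F

/-!
For `l : L` the set `{p | l ≤ f p}` is a `𝓓`-filter, because `f` is monotone and preserves the
meets of members of `𝓓`. Hence a lower bound of `f '' S` is a lower bound of `f '' F` for the
filter `F` generated by `S`: the sets `f '' S` and `f '' F` have the same lower bounds, and so the
same infima. Adding a point of the nonempty filter `F` to a finite generating set keeps it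
generating, and the image of the resulting finite nonempty set has an infimum in the lattice.
Finally `p^↑ ⊇ F` in `X` exactly when `p ∈ F`, so `e_X⁻¹({x' | x' ≥ x}) = F`.
-/

section

variable {P : Type u} [PartialOrder P] {𝓓 : Set (Set P)}

theorem isDFilter_preimage_Ici {L : Type*} [Preorder L] {f : P → L} (hfm : Monotone f)
    (hfD : ∀ T ∈ 𝓓, ∀ m : P, IsGLB T m → IsGLB (f '' T) (f m)) (l : L) :
    IsDFilter 𝓓 (f ⁻¹' Set.Ici l) :=
  ⟨fun _ _ hab ha => le_trans ha (hfm hab), fun T hT hTl m hm =>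
    (hfD T hT m hm).2 (Set.forall_mem_image.2 fun _ ht => hTl ht)⟩

theorem SmallestDFilter.insert {S F : Set P} (h : SmallestDFilter 𝓓 S F) {p : P} (hp : p ∈ F) :
    SmallestDFilter 𝓓 (insert p S) F :=
  ⟨h.1, Set.insert_subset hp h.2.1, fun G hG hpG => h.2.2 G hG ((Set.subset_insert p S).trans hpG)⟩

section

variable {L : Type*} {f : P → L} {S F : Set P}

theorem SmallestDFilter.lowerBounds_image_eq [Preorder L] (h : SmallestDFilter 𝓓 S F)
    (hfm : Monotone f) (hfD : ∀ T ∈ 𝓓, ∀ m : P, IsGLB T m → IsGLB (f '' T) (f m)) :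
    lowerBounds (f '' F) = lowerBounds (f '' S) := by
  refine (lowerBounds_mono_set (Set.image_mono h.2.1)).antisymm fun l hl => ?_
  have hFl : F ⊆ f ⁻¹' Set.Ici l :=
    h.2.2 _ (isDFilter_preimage_Ici hfm hfD l) fun s hs => hl ⟨s, hs, rfl⟩
  exact Set.forall_mem_image.2 fun _ hp => hFl hp

theorem SmallestDFilter.isGLB_image_iff [Preorder L] (h : SmallestDFilter 𝓓 S F)
    (hfm : Monotone f) (hfD : ∀ T ∈ 𝓓, ∀ m : P, IsGLB T m → IsGLB (f '' T) (f m)) {q : L} :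
    IsGLB (f '' F) q ↔ IsGLB (f '' S) q :=
  isGLB_congr (h.lowerBounds_image_eq hfm hfD)

theorem Set.Finite.exists_isGLB {α : Type*} [SemilatticeInf α] {T : Set α} (hT : T.Finite)
    (hne : T.Nonempty) : ∃ a, IsGLB T a :=
  ⟨_, by simpa using Finset.isGLB_inf' (hT.toFinset_nonempty.2 hne)⟩

theorem GoodFilterFin.exists_isGLB_image [SemilatticeInf L] (hF : GoodFilterFin 𝓓 F)
    (hfm : Monotone f) (hfD : ∀ T ∈ 𝓓, ∀ m : P, IsGLB T m → IsGLB (f '' T) (f m)) :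
    ∃ q, IsGLB (f '' F) q := by
  obtain ⟨⟨p, hp⟩, -, S, hS, hgen⟩ := hF
  obtain ⟨q, hq⟩ := ((hS.insert p).image f).exists_isGLB ((Set.insert_nonempty p S).image f)
  exact ⟨q, ((hgen.insert hp).isGLB_image_iff hfm hfD).2 hq⟩

end

theorem preimage_Ici_eq_of_forall_eq_Ici (eX : P → ({F : Set P // GoodFilterFin 𝓓 F})ᵒᵈ)
    (heX : ∀ p : P, (OrderDual.ofDual (eX p)).1 = Set.Ici p)
    (x : ({F : Set P // GoodFilterFin 𝓓 F})ᵒᵈ) :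
    eX ⁻¹' Set.Ici x = (OrderDual.ofDual x).1 := by
  ext p
  change (OrderDual.ofDual (eX p)).1 ⊆ (OrderDual.ofDual x).1 ↔ _
  rw [heX p]
  exact ⟨fun h => h le_rfl, fun hp => (OrderDual.ofDual x).2.2.1.1.Ici_subset hp⟩

end

theorem Dmorphism_enough_meets_general {P L : Type u} [PartialOrder P] [Lattice L]
    (𝓓 : Set (Set P))
    (eX : P → ({F : Set P // GoodFilterFin 𝓓 F})ᵒᵈ)
    (heX : ∀ p : P, (OrderDual.ofDual (eX p)).1 = Set.Ici p)
    (f : P → L) (hfm : Monotone f)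
    (hfD : ∀ S ∈ 𝓓, ∀ m : P, IsGLB S m → IsGLB (f '' S) (f m)) :
    ∀ x : ({F : Set P // GoodFilterFin 𝓓 F})ᵒᵈ,
      ∃ q : L, IsGLB (f '' (eX ⁻¹' Set.Ici x)) q ∧
        ∀ S : Set P, S.Finite → SmallestDFilter 𝓓 S (OrderDual.ofDual x).1 →
          IsGLB (f '' S) q := by
  intro x
  obtain ⟨q, hq⟩ := (OrderDual.ofDual x).2.exists_isGLB_image hfm hfD
  rw [preimage_Ici_eq_of_forall_eq_Ici eX heX x]
  exact ⟨q, hq, fun S _ hS => (hS.isGLB_image_iff hfm hfD).1 hq⟩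

/-- a `𝓓`-morphism into a lattice has enough meets for `e_X : p ↦ p^↑`,
where `e_X` maps into the nonempty finitely generated `𝓓`-filters under reverse inclusion;
moreover the relevant infimum is the infimum of `f '' S` for any finite generating set `S`. -/
theorem Dmorphism_enough_meets {P L : Type u} [PartialOrder P] [Lattice L]
    (𝓓 : Set (Set P)) (h𝓓 : IsMeetSpec 𝓓) (hfin : ∀ S ∈ 𝓓, S.Finite)
    (eX : P → ({F : Set P // GoodFilterFin 𝓓 F})ᵒᵈ)
    (heX : ∀ p : P, (OrderDual.ofDual (eX p)).1 = Set.Ici p)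
    (f : P → L) (hfm : Monotone f)
    (hfD : ∀ S ∈ 𝓓, ∀ m : P, IsGLB S m → IsGLB (f '' S) (f m)) :
    ∀ x : ({F : Set P // GoodFilterFin 𝓓 F})ᵒᵈ,
      ∃ q : L, IsGLB (f '' (eX ⁻¹' Set.Ici x)) q ∧
        ∀ S : Set P, S.Finite → SmallestDFilter 𝓓 S (OrderDual.ofDual x).1 →
          IsGLB (f '' S) q :=
  Dmorphism_enough_meets_general 𝓓 eX heX f hfm hfD
end

section
/- Let e_X : P → X be a meet-extension, e_Y : P → Y a join-extension, and R ⊆ X × Y a relation. Suppose ≼ and ≼' are both preorders on the disjoint union X ⊔ Y witnessing 3-coherence of (e_X, e_Y, R). Then ≼ = ≼', and moreover ≼ satisfies: for all x ∈ X and y ∈ Y, y ≼ x if and only if for all p, q ∈ P, (e_Y p ≤ y and e_X q ≥ x) implies p ≤ q. -/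
universe u

/-- A preorder `r` on the disjoint union `X ⊕ Y` witnesses 3-coherence of `(e_X, e_Y, R)`. -/
def Witnesses3Coherence {P X Y : Type u} [PartialOrder P] [PartialOrder X] [PartialOrder Y]
    (eX : P → X) (eY : P → Y) (R : X → Y → Prop)
    (r : X ⊕ Y → X ⊕ Y → Prop) : Prop :=
  Reflexive r ∧ Transitive r ∧
  (∀ (x : X) (y : Y), r (Sum.inl x) (Sum.inr y) ↔ R x y) ∧
  (∀ x₁ x₂ : X, r (Sum.inl x₁) (Sum.inl x₂) ↔ x₁ ≤ x₂) ∧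
  (∀ y₁ y₂ : Y, r (Sum.inr y₁) (Sum.inr y₂) ↔ y₁ ≤ y₂) ∧
  (∀ p : P, r (Sum.inl (eX p)) (Sum.inr (eY p)) ∧ r (Sum.inr (eY p)) (Sum.inl (eX p))) ∧
  (∀ (S : Set P) (x : X), IsGLB (eX '' S) x →
    (∀ p ∈ S, r (Sum.inl x) (Sum.inl (eX p))) ∧
    ∀ z : X ⊕ Y, (∀ p ∈ S, r z (Sum.inl (eX p))) → r z (Sum.inl x)) ∧
  (∀ (T : Set P) (y : Y), IsLUB (eY '' T) y →
    (∀ p ∈ T, r (Sum.inr (eY p)) (Sum.inr y)) ∧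
    ∀ z : X ⊕ Y, (∀ p ∈ T, r (Sum.inr (eY p)) z) → r (Sum.inr y) z)

/-- the preorder witnessing 3-coherence is unique and satisfies condition (G3). -/
theorem witness_unique {P X Y : Type u} [PartialOrder P] [PartialOrder X] [PartialOrder Y]
    {eX : P → X} {eY : P → Y} (hX : IsMeetExtension eX) (hY : IsJoinExtension eY)
    (R : X → Y → Prop) (r r' : X ⊕ Y → X ⊕ Y → Prop)
    (h : Witnesses3Coherence eX eY R r) (h' : Witnesses3Coherence eX eY R r') :
    r = r' ∧
    ∀ (x : X) (y : Y),
      (r (Sum.inr y) (Sum.inl x) ↔ ∀ p q : P, eY p ≤ y → x ≤ eX q → p ≤ q) := by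
  have key : ∀ (rr : X ⊕ Y → X ⊕ Y → Prop), Witnesses3Coherence eX eY R rr → ∀ (x : X) (y : Y),
      (rr (Sum.inr y) (Sum.inl x) ↔ ∀ p q : P, eY p ≤ y → x ≤ eX q → p ≤ q) := by
    rintro rr ⟨rrefl, rtrans, rR, rXX, rYY, rP, rGLB, rLUB⟩ x y
    constructor
    · intro hyx p q hp hq
      have h1 : rr (Sum.inl (eX p)) (Sum.inr (eY p)) := (rP p).1
      have h2 : rr (Sum.inr (eY p)) (Sum.inr y) := (rYY _ _).2 hp
      have h3 : rr (Sum.inl x) (Sum.inl (eX q)) := (rXX _ _).2 hq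
      have := rtrans (rtrans (rtrans h1 h2) hyx) h3
      exact (hX.1 p q).1 ((rXX _ _).1 this)
    · intro hpq
      apply (rGLB {q : P | x ≤ eX q} x (hX.2 x)).2
      intro q hq
      apply (rLUB {p : P | eY p ≤ y} y (hY.2 y)).2
      intro p hp
      have h1 : rr (Sum.inr (eY p)) (Sum.inl (eX p)) := (rP p).2
      have h2 : rr (Sum.inl (eX p)) (Sum.inl (eX q)) := (rXX _ _).2 ((hX.1 p q).2 (hpq p q hp hq))
      exact rtrans h1 h2
  refine ⟨?_, key r h⟩
  obtain ⟨hrefl, htrans, hR, hXX, hYY, hP, hGLB, hLUB⟩ := h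
  obtain ⟨rrefl', rtrans', rR', rXX', rYY', rP', rGLB', rLUB'⟩ := h'
  funext a b
  apply propext
  cases a with
  | inl x₁ =>
    cases b with
    | inl x₂ => exact (hXX x₁ x₂).trans (rXX' x₁ x₂).symm
    | inr y₂ => exact (hR x₁ y₂).trans (rR' x₁ y₂).symm
  | inr y₁ =>
    cases b with
    | inl x₂ =>
      exact (key r ⟨hrefl, htrans, hR, hXX, hYY, hP, hGLB, hLUB⟩ x₂ y₁).trans
        (key r' ⟨rrefl', rtrans', rR', rXX', rYY', rP', rGLB', rLUB'⟩ x₂ y₁).symm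
    | inr y₂ => exact (hYY y₁ y₂).trans (rYY' y₁ y₂).symm
end
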